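/- arXiv:2209.15160 — 3 statements merged into one kernel-verified Lean document; each statement's English description precedes it below -/
import Mathlib

section
/- Let T be an n×n complex matrix with X = Re T, Y = Im T, where Y is positive definite and det T ≠ 0. Then Y + X Y⁻¹ X is invertible, and the real and imaginary parts of -(T⁻¹)ᵗ are given by Re(-(T⁻¹)ᵗ) = -((Y + X Y⁻¹ X)⁻¹)ᵗ Xᵗ (Y⁻¹)ᵗ and Im(-(T⁻¹)ᵗ) = ((Y + X Y⁻¹ X)⁻¹)ᵗ. -/
open Matrix

/-- Auxiliary algebraic identity: if `B` is invertible with two-sided inverse `C`, then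
`B + A C A = (A + iB)(C(A - iB))`. -/
lemma stmt0_aux (n : ℕ) (A B C : Matrix (Fin n) (Fin n) ℂ)
    (hBC : B * C = 1) (hCB : C * B = 1) :
    B + A * C * A = (A + Complex.I • B) * (C * (A - Complex.I • B)) := by
  rw [Matrix.mul_sub, Matrix.mul_smul, hCB, Matrix.add_mul, Matrix.smul_mul,
    Matrix.mul_sub, Matrix.mul_sub, Matrix.mul_smul, Matrix.mul_smul,
    mul_one, ← Matrix.mul_assoc B C A, hBC, Matrix.one_mul, Matrix.mul_one,
    smul_sub, smul_smul, Complex.I_mul_I, neg_one_smul, ← Matrix.mul_assoc]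
  abel

/-- For `T ∈ M(n;ℂ)` with `X = Re T`, `Y = Im T`, `Y` positive definite and
`det T ≠ 0`, the matrix `Y + X Y⁻¹ X` is invertible and the real and imaginary parts of
`-(T⁻¹)ᵀ` are `-((Y + X Y⁻¹ X)⁻¹)ᵀ Xᵀ (Y⁻¹)ᵀ` and `((Y + X Y⁻¹ X)⁻¹)ᵀ` respectively. -/
theorem stmt0 (n : ℕ) (T : Matrix (Fin n) (Fin n) ℂ)
    (X Y : Matrix (Fin n) (Fin n) ℝ)
    (hX : ∀ i j, X i j = (T i j).re) (hY : ∀ i j, Y i j = (T i j).im)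
    (hYpd : Y.PosDef) (hT : T.det ≠ 0) :
    IsUnit (Y + X * Y⁻¹ * X).det ∧
    (∀ i j, ((-(T⁻¹)ᵀ) i j).re = (-(((Y + X * Y⁻¹ * X)⁻¹)ᵀ * Xᵀ * (Y⁻¹)ᵀ)) i j) ∧
    (∀ i j, ((-(T⁻¹)ᵀ) i j).im = (((Y + X * Y⁻¹ * X)⁻¹)ᵀ) i j) := by
  have hYdet : Y.det ≠ 0 := ne_of_gt hYpd.det_pos
  set φ := (Complex.ofRealHom.mapMatrix :
      Matrix (Fin n) (Fin n) ℝ →+* Matrix (Fin n) (Fin n) ℂ) with hφ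
  have φapp : ∀ (A : Matrix (Fin n) (Fin n) ℝ) i j, φ A i j = (A i j : ℂ) := fun A i j => rfl
  have hφdet : ∀ A : Matrix (Fin n) (Fin n) ℝ, (φ A).det = (A.det : ℂ) :=
    fun A => (RingHom.map_det Complex.ofRealHom A).symm
  have hinv : ∀ A : Matrix (Fin n) (Fin n) ℝ, A.det ≠ 0 → (φ A)⁻¹ = φ A⁻¹ := by
    intro A hA
    apply Matrix.inv_eq_right_inv
    rw [← _root_.map_mul, Matrix.mul_nonsing_inv A (isUnit_iff_ne_zero.mpr hA)]
    exact _root_.map_one φ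
  have hT' : T = φ X + Complex.I • φ Y := by
    ext i j
    simp only [Matrix.add_apply, Matrix.smul_apply, φapp, hX, hY, smul_eq_mul]
    apply Complex.ext <;> simp
  set M := Y + X * Y⁻¹ * X with hM
  set Tbar : Matrix (Fin n) (Fin n) ℂ := φ X - Complex.I • φ Y with hTbar
  have hYcdet : (φ Y).det ≠ 0 := by
    rw [hφdet]; exact_mod_cast hYdet
  have hBC : φ Y * (φ Y)⁻¹ = 1 := Matrix.mul_nonsing_inv _ (isUnit_iff_ne_zero.mpr hYcdet)
  have hCB : (φ Y)⁻¹ * φ Y = 1 := Matrix.nonsing_inv_mul _ (isUnit_iff_ne_zero.mpr hYcdet)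
  have key : φ M = T * ((φ Y)⁻¹ * Tbar) := by
    rw [hT', hTbar, hM, map_add, _root_.map_mul, _root_.map_mul, ← hinv Y hYdet]
    exact stmt0_aux n (φ X) (φ Y) ((φ Y)⁻¹) hBC hCB
  have hTbarConj : Tbar = T.map (starRingEnd ℂ) := by
    ext i j
    simp only [hTbar, Matrix.sub_apply, Matrix.smul_apply, φapp, Matrix.map_apply, hT',
      Matrix.add_apply, smul_eq_mul, map_add, _root_.map_mul, Complex.conj_I,
      Complex.conj_ofReal]
    ring
  have hTbardet : Tbar.det ≠ 0 := by
    rw [hTbarConj]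
    have : (T.map (starRingEnd ℂ)).det = (starRingEnd ℂ) T.det :=
      (RingHom.map_det (starRingEnd ℂ) T).symm
    rw [this]
    simpa using hT
  have hYinvdet : ((φ Y)⁻¹).det ≠ 0 := by
    rw [Matrix.det_nonsing_inv, Ring.inverse_eq_inv']
    exact inv_ne_zero hYcdet
  have hMcdet : (φ M).det ≠ 0 := by
    rw [key, Matrix.det_mul, Matrix.det_mul]
    exact mul_ne_zero hT (mul_ne_zero hYinvdet hTbardet)
  have hMdet : M.det ≠ 0 := by
    rw [hφdet] at hMcdet
    exact_mod_cast hMcdet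
  refine ⟨isUnit_iff_ne_zero.mpr hMdet, ?_⟩
  have hTinv : T⁻¹ = (φ Y)⁻¹ * Tbar * (φ M)⁻¹ := by
    apply Matrix.inv_eq_right_inv
    rw [← Matrix.mul_assoc, ← Matrix.mul_assoc, Matrix.mul_assoc T, ← key,
      Matrix.mul_nonsing_inv _ (isUnit_iff_ne_zero.mpr hMcdet)]
  have hTinv2 : T⁻¹ = φ (Y⁻¹ * X * M⁻¹) - Complex.I • φ M⁻¹ := by
    rw [hTinv, hinv Y hYdet, hinv M hMdet, hTbar, Matrix.mul_sub, Matrix.mul_smul,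
      Matrix.sub_mul, Matrix.smul_mul, ← _root_.map_mul, ← _root_.map_mul,
      ← _root_.map_mul, Matrix.nonsing_inv_mul Y (isUnit_iff_ne_zero.mpr hYdet),
      RingHom.map_one, Matrix.one_mul]
  have hre : ∀ i j, (T⁻¹ i j).re = (Y⁻¹ * X * M⁻¹) i j := by
    intro i j
    rw [hTinv2]
    simp only [Matrix.sub_apply, Matrix.smul_apply, φapp, smul_eq_mul, Complex.sub_re,
      Complex.ofReal_re, Complex.mul_re, Complex.I_re, Complex.I_im, Complex.ofReal_im]
    ring
  have him : ∀ i j, (T⁻¹ i j).im = -(M⁻¹ i j) := by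
    intro i j
    rw [hTinv2]
    simp only [Matrix.sub_apply, Matrix.smul_apply, φapp, smul_eq_mul, Complex.sub_im,
      Complex.ofReal_im, Complex.mul_im, Complex.I_re, Complex.I_im, Complex.ofReal_re]
    ring
  have htr : (M⁻¹)ᵀ * Xᵀ * (Y⁻¹)ᵀ = (Y⁻¹ * X * M⁻¹)ᵀ := by
    rw [Matrix.transpose_mul, Matrix.transpose_mul, Matrix.mul_assoc]
  constructor
  · intro i j
    rw [Matrix.neg_apply, Matrix.neg_apply, htr, Matrix.transpose_apply,
      Matrix.transpose_apply, Complex.neg_re, hre]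
  · intro i j
    rw [Matrix.neg_apply, Matrix.transpose_apply, Matrix.transpose_apply,
      Complex.neg_im, him, neg_neg]
end

section
/- Let ω = 2π Σⱼₖ Yₖⱼ dxⱼ∧dyₖ + 2π Σⱼₖ (XᵗY)ₖⱼ dyⱼ∧dyₖ and F = -2πi Σⱼₖ (Sᵗ)ₖⱼ dxⱼ∧dyₖ on ℝ²ⁿ, where X, Y, S are real n×n matrices. Then the top wedge power satisfies (ω - F)ⁿ = (2πi)ⁿ n! · det(-iY + Sᵗ) · dx₁∧dy₁∧⋯∧dxₙ∧dyₙ. -/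
/-!
Even-degree elements of an exterior algebra commute, so `ω - F` can be expanded like a polynomial
inside the commutative subalgebra generated by `2`-forms. Write `ω - F = ∑ⱼ dxⱼ ∧ aⱼ + ∑ⱼ dyⱼ ∧ bⱼ`
with `aⱼ = ∑ₖ Aₖⱼ dyₖ`, `bⱼ = ∑ₖ Bₖⱼ dyₖ`. In the multinomial expansion of the `n`-th power a
product vanishes as soon as a factor repeats or some `dyⱼ ∧ bⱼ` occurs (then `n + 1` of its `2n`
one-forms lie in the span of the `dyₖ`), so only the `n!` orderings of the `dxⱼ ∧ aⱼ` survive.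
Finally `w ↦ ∏ⱼ dxⱼ ∧ wⱼ` is alternating, whence `∏ⱼ dxⱼ ∧ aⱼ = det A • ∏ⱼ dxⱼ ∧ dyⱼ`, with
`A = 2πi (-iY + Sᵀ)`.
-/

open Matrix
open scoped IsMulCommutative

theorem Fintype.prod_eq_zero_of_mul_eq_zero {ι R : Type*} [Fintype ι] [CommMonoidWithZero R]
    {f : ι → R} {i j : ι} (hij : i ≠ j) (h : f i * f j = 0) : ∏ k, f k = 0 := by
  classical
  rw [← Finset.prod_mul_prod_compl {i, j}, Finset.prod_pair hij, h, zero_mul]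

theorem AlternatingMap.map_sum_smul_eq_det_smul {R M N ι : Type*} [CommRing R]
    [AddCommGroup M] [Module R M] [AddCommGroup N] [Module R N] [Fintype ι] [DecidableEq ι]
    (f : M [⋀^ι]→ₗ[R] N) (C : Matrix ι ι R) (v : ι → M) :
    f (fun i => ∑ k, C k i • v k) = C.det • f v := by
  have := f.toMultilinearMap.map_sum fun i k => C k i • v k
  simp only [AlternatingMap.coe_multilinearMap] at this
  simp only [this, f.map_smul_univ]
  rw [det_apply, Finset.sum_smul]
  refine (Fintype.sum_of_injective (fun σ : Equiv.Perm ι => ⇑σ) DFunLike.coe_injective _ _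
    (fun r hr => ?_) (fun σ => ?_)).symm
  · have : ¬ Function.Injective r := fun hinj =>
      hr ⟨Equiv.ofBijective r (Finite.injective_iff_bijective.mp hinj), rfl⟩
    exact smul_eq_zero_of_right _ (f.map_eq_zero_of_not_injective (v ∘ r) fun h => this h.of_comp)
  · change _ = _ • f (v ∘ σ)
    rw [f.map_perm, smul_comm, smul_assoc]

namespace ExteriorAlgebra

variable {R M : Type*} [CommRing R] [AddCommGroup M] [Module R M]

theorem ι_mul_ι_anticomm (v w : M) : ι R v * ι R w = -(ι R w * ι R v) :=
  eq_neg_of_add_eq_zero_left (ι_add_mul_swap v w)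

theorem commute_ι_ι_mul_ι (u v w : M) : Commute (ι R u) (ι R v * ι R w) := by
  rw [Commute, SemiconjBy, ← mul_assoc, ι_mul_ι_anticomm u v, neg_mul, mul_assoc,
    ι_mul_ι_anticomm u w, mul_neg, neg_neg, mul_assoc]

theorem commute_ι_mul_ι (a b c d : M) : Commute (ι R a * ι R b) (ι R c * ι R d) :=
  (commute_ι_ι_mul_ι a c d).mul_left (commute_ι_ι_mul_ι b c d)

variable (R M) in
def twoFormSubalgebra : Subalgebra R (ExteriorAlgebra R M) :=
  Algebra.adjoin R (Set.range fun vw : M × M => ι R vw.1 * ι R vw.2)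

instance : IsMulCommutative (twoFormSubalgebra R M) :=
  Algebra.isMulCommutative_adjoin R <| by
    rintro _ ⟨⟨a, b⟩, rfl⟩ _ ⟨⟨c, d⟩, rfl⟩
    exact commute_ι_mul_ι a b c d

variable (R) in
def twoForm (v : M) : M →ₗ[R] twoFormSubalgebra R M :=
  LinearMap.codRestrict (twoFormSubalgebra R M).toSubmodule
    (LinearMap.mulLeft R (ι R v) ∘ₗ ι R) fun w => Algebra.subset_adjoin ⟨(v, w), rfl⟩

@[simp]
theorem coe_twoForm (v w : M) : (twoForm R v w : ExteriorAlgebra R M) = ι R v * ι R w := rfl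

theorem twoForm_self (v : M) : twoForm R v v = 0 :=
  Subtype.ext (ι_sq_zero v)

theorem twoForm_mul_twoForm_of_right_eq (p q r : M) :
    twoForm R p q * twoForm R r q = 0 := by
  refine Subtype.ext ?_
  simp only [Subalgebra.coe_mul, coe_twoForm, ZeroMemClass.coe_zero]
  rw [ι_mul_ι_anticomm r q, mul_neg, ← mul_assoc, mul_assoc (ι R p), ι_sq_zero, mul_zero,
    zero_mul, neg_zero]

theorem twoForm_mul_twoForm_of_right_eq_left (p q s : M) :
    twoForm R p q * twoForm R q s = 0 := by
  refine Subtype.ext ?_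
  simp only [Subalgebra.coe_mul, coe_twoForm, ZeroMemClass.coe_zero]
  rw [← mul_assoc, mul_assoc (ι R p), ι_sq_zero, mul_zero, zero_mul]

section prodTwoForm

variable {ι : Type*} [Fintype ι]

variable (R) in
def prodTwoForm (v : ι → M) : M [⋀^ι]→ₗ[R] twoFormSubalgebra R M where
  toMultilinearMap :=
    (MultilinearMap.mkPiAlgebra R ι (twoFormSubalgebra R M)).compLinearMap fun i => twoForm R (v i)
  map_eq_zero_of_eq' w i j hw hij := Fintype.prod_eq_zero_of_mul_eq_zero hij <| by
    rw [hw]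
    exact twoForm_mul_twoForm_of_right_eq _ _ _

theorem prod_twoForm_sum_smul [DecidableEq ι] (v y : ι → M) (C : Matrix ι ι R) :
    ∏ i, twoForm R (v i) (∑ k, C k i • y k) = C.det • ∏ i, twoForm R (v i) (y i) :=
  (prodTwoForm R v).map_sum_smul_eq_det_smul C y

theorem prod_twoForm_sum_smul_eq_zero [DecidableEq ι] (v y : ι → M) (C : Matrix ι ι R) {i c : ι}
    (hv : v i = y c) : ∏ i, twoForm R (v i) (∑ k, C k i • y k) = 0 := by
  rw [prod_twoForm_sum_smul]
  refine smul_eq_zero_of_right _ ?_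
  obtain rfl | hci := eq_or_ne c i
  · exact Finset.prod_eq_zero (Finset.mem_univ c) (hv ▸ twoForm_self _)
  · exact Fintype.prod_eq_zero_of_mul_eq_zero hci (hv ▸ twoForm_mul_twoForm_of_right_eq_left _ _ _)

end prodTwoForm

theorem pow_sum_twoForm {n : ℕ} (x y : Fin n → M) (A B : Matrix (Fin n) (Fin n) R) :
    (∑ j, twoForm R (x j) (∑ k, A k j • y k) + ∑ j, twoForm R (y j) (∑ k, B k j • y k)) ^ n =
      ((n.factorial : R) * A.det) • ∏ j, twoForm R (x j) (y j) := by
  set u : Fin n ⊕ Fin n → M := Sum.elim x y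
  set C := fromCols A B
  set P : Fin n ⊕ Fin n → twoFormSubalgebra R M := fun t => twoForm R (u t) (∑ k, C k t • y k)
  have hvanish : ∀ s ∉ Set.range fun σ : Equiv.Perm (Fin n) => Sum.inl ∘ σ, ∏ i, P (s i) = 0 := by
    intro s hs
    by_cases hr : ∃ i c, s i = Sum.inr c
    · obtain ⟨i, c, hi⟩ := hr
      exact prod_twoForm_sum_smul_eq_zero (u ∘ s) y (C.submatrix id s) (i := i) (c := c)
        (by simp [u, hi])
    · have hl : ∀ i, ∃ j, s i = Sum.inl j := fun i => by
        cases hsi : s i with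
        | inl j => exact ⟨j, rfl⟩
        | inr c => exact absurd ⟨i, c, hsi⟩ hr
      choose p hp using hl
      have hp_not_inj : ¬ Function.Injective p := fun hinj => hs
        ⟨Equiv.ofBijective p (Finite.injective_iff_bijective.mp hinj), funext fun i => (hp i).symm⟩
      obtain ⟨i, j, hpij, hij⟩ := Function.not_injective_iff.mp hp_not_inj
      refine Fintype.prod_eq_zero_of_mul_eq_zero hij ?_
      rw [hp i, hp j, hpij]
      exact twoForm_mul_twoForm_of_right_eq _ _ _
  calc _ = (∑ t, P t) ^ n := by rw [Fintype.sum_sum_type]; rfl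
    _ = ∑ σ : Equiv.Perm (Fin n), ∏ i, P (Sum.inl (σ i)) := by
      rw [Fintype.sum_pow]
      exact (Fintype.sum_of_injective _ (Sum.inl_injective.comp_left.comp DFunLike.coe_injective)
        _ _ hvanish fun _ => rfl).symm
    _ = (n.factorial : R) • ∏ j, P (Sum.inl j) := by
      simp only [Equiv.prod_comp _ fun j => P (Sum.inl j), Finset.sum_const, Finset.card_univ,
        Fintype.card_perm, Fintype.card_fin, Nat.cast_smul_eq_nsmul]
    _ = _ := by rw [← smul_smul, ← prod_twoForm_sum_smul]; rfl

theorem pow_sum_smul_ι_mul_ι {n : ℕ} (x y : Fin n → M) (A B : Matrix (Fin n) (Fin n) R) :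
    (∑ j, ∑ k, A k j • (ι R (x j) * ι R (y k)) + ∑ j, ∑ k, B k j • (ι R (y j) * ι R (y k))) ^ n =
      ((n.factorial : R) * A.det) • (List.ofFn fun j => ι R (x j) * ι R (y j)).prod := by
  have h := congrArg (twoFormSubalgebra R M).val (pow_sum_twoForm x y A B)
  rw [← List.prod_ofFn] at h
  simpa [map_sum, map_list_prod, List.map_ofFn, Function.comp_def] using h

end ExteriorAlgebra

/-- In the exterior algebra of `ℂ²ⁿ` with generators `dx₁,…,dxₙ,dy₁,…,dyₙ`,
let `ω = 2π Σⱼₖ Yₖⱼ dxⱼ∧dyₖ + 2π Σⱼₖ (XᵀY)ₖⱼ dyⱼ∧dyₖ` and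
`F = -2πi Σⱼₖ (Sᵀ)ₖⱼ dxⱼ∧dyₖ`, where `X, Y, S` are real `n×n` matrices.  Then
`(ω - F)ⁿ = (2πi)ⁿ n! det(-iY + Sᵀ) dx₁∧dy₁∧⋯∧dxₙ∧dyₙ`. -/
theorem stmt12 (n : ℕ) (X Y S : Matrix (Fin n) (Fin n) ℝ) :
    let dx : Fin n → ExteriorAlgebra ℂ (Fin n ⊕ Fin n → ℂ) :=
      fun j => ExteriorAlgebra.ι ℂ (Pi.single (Sum.inl j) 1)
    let dy : Fin n → ExteriorAlgebra ℂ (Fin n ⊕ Fin n → ℂ) :=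
      fun k => ExteriorAlgebra.ι ℂ (Pi.single (Sum.inr k) 1)
    let ω : ExteriorAlgebra ℂ (Fin n ⊕ Fin n → ℂ) :=
      (∑ j, ∑ k, (((2 * Real.pi * Y k j : ℝ)) : ℂ) • (dx j * dy k)) +
      (∑ j, ∑ k, (((2 * Real.pi * (Xᵀ * Y) k j : ℝ)) : ℂ) • (dy j * dy k))
    let F : ExteriorAlgebra ℂ (Fin n ⊕ Fin n → ℂ) :=
      ∑ j, ∑ k, ((-((2 * Real.pi : ℝ) : ℂ)) * Complex.I * ((Sᵀ k j : ℝ) : ℂ)) •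
        (dx j * dy k)
    (ω - F) ^ n =
      ((((2 * Real.pi : ℝ) : ℂ) * Complex.I) ^ n * (n.factorial : ℂ) *
        ((-Complex.I) • Y.map (fun r => (r : ℂ)) + (S.map (fun r => (r : ℂ)))ᵀ).det) •
        (List.ofFn (fun j : Fin n => dx j * dy j)).prod := by
  intro dx dy ω F
  set c : ℂ := ((2 * Real.pi : ℝ) : ℂ) * Complex.I
  set Z := (-Complex.I) • Y.map (fun r => (r : ℂ)) + (S.map (fun r => (r : ℂ)))ᵀ
  have hcoeff : ∀ j k, (((2 * Real.pi * Y k j : ℝ)) : ℂ) -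
      (-((2 * Real.pi : ℝ) : ℂ)) * Complex.I * ((Sᵀ k j : ℝ) : ℂ) = (c • Z) k j := by
    intro j k
    simp only [c, Z, Matrix.smul_apply, Matrix.add_apply, map_apply, transpose_apply, smul_eq_mul]
    push_cast
    linear_combination (2 * (Real.pi : ℂ) * (Y k j : ℂ)) * Complex.I_mul_I
  have hωF : ω - F = ∑ j, ∑ k, (c • Z) k j • (dx j * dy k) +
      ∑ j, ∑ k, (((2 * Real.pi * (Xᵀ * Y) k j : ℝ)) : ℂ) • (dy j * dy k) := by
    simp only [ω, F, add_sub_right_comm, ← Finset.sum_sub_distrib, ← sub_smul, hcoeff]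
  rw [hωF]
  refine (ExteriorAlgebra.pow_sum_smul_ι_mul_ι (fun j => Pi.single (Sum.inl j) 1)
    (fun k => Pi.single (Sum.inr k) 1) (c • Z)
    (of fun k j => ((2 * Real.pi * (Xᵀ * Y) k j : ℝ) : ℂ))).trans ?_
  congr 1
  rw [det_smul, Fintype.card_fin]
  ring
end

section
/- Let X, Y ∈ M(n;ℝ) with Y invertible, J = [[-XY⁻¹, -Y - XY⁻¹X],[Y⁻¹, Y⁻¹X]], and τ ∈ M(n;ℝ). Define the B-field transform J(B) = C⁻¹ · Ĵ · C where Ĵ = diag-block extension of J acting on TX ⊕ T*X as [[J, 0],[0, -Jᵗ]] and C = [[I₂ₙ, 0],[b, I₂ₙ]] with b = [[0, τᵗ],[-τ, 0]]. Then J(B) = Ĵ (i.e. the B-field transform preserves the generalized complex structure) if and only if τ(X + iY) = (τ(X + iY))ᵗ. -/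
open Matrix

lemma stmt17_key {n : ℕ} (X Y τ : Matrix (Fin n) (Fin n) ℝ) (hY : IsUnit Y.det) :
    (τᵀ * Y⁻¹ = Y⁻¹ᵀ * τ ∧
      τᵀ * (Y⁻¹ * X) = -((-(X * Y⁻¹))ᵀ * τᵀ) ∧
        τ * (X * Y⁻¹) = (Y⁻¹ * X)ᵀ * τ ∧
          -(τ * (-Y - X * Y⁻¹ * X)) = -((-Y - X * Y⁻¹ * X)ᵀ * τᵀ))
    ↔ ((τ * X)ᵀ = τ * X ∧ (τ * Y)ᵀ = τ * Y) := by
  have hYt : IsUnit Yᵀ.det := by rwa [Matrix.det_transpose]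
  have hiY : Y⁻¹ * Y = 1 := Matrix.nonsing_inv_mul Y hY
  have hYi : Y * Y⁻¹ = 1 := Matrix.mul_nonsing_inv Y hY
  have htinv : Y⁻¹ᵀ = Yᵀ⁻¹ := Matrix.transpose_nonsing_inv Y
  constructor
  · rintro ⟨h1, h2, h3, h4⟩
    have hB : Yᵀ * τᵀ = τ * Y := by
      have h := congrArg (fun M => Yᵀ * M * Y) h1
      simp only [mul_assoc, hiY, mul_one, htinv,
        Matrix.mul_nonsing_inv_cancel_left _ _ hYt] at h
      simpa [mul_assoc] using h
    have hA : Xᵀ * τᵀ = τ * X := by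
      have h := congrArg (fun M => M * Y) h3
      simp only [mul_assoc, hiY, mul_one, Matrix.transpose_mul, htinv] at h
      rw [show τ * Y = Yᵀ * τᵀ from hB.symm,
        Matrix.nonsing_inv_mul_cancel_left _ _ hYt] at h
      exact h.symm
    exact ⟨by rw [Matrix.transpose_mul, hA], by rw [Matrix.transpose_mul, hB]⟩
  · rintro ⟨hA', hB'⟩
    have hA : Xᵀ * τᵀ = τ * X := by rw [← Matrix.transpose_mul]; exact hA'
    have hB : Yᵀ * τᵀ = τ * Y := by rw [← Matrix.transpose_mul]; exact hB'
    have h1 : τᵀ * Y⁻¹ = Y⁻¹ᵀ * τ := by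
      rw [htinv]
      calc τᵀ * Y⁻¹ = Yᵀ⁻¹ * (Yᵀ * τᵀ) * Y⁻¹ := by
            rw [Matrix.nonsing_inv_mul_cancel_left _ _ hYt]
        _ = Yᵀ⁻¹ * (τ * (Y * Y⁻¹)) := by rw [hB, mul_assoc, mul_assoc]
        _ = Yᵀ⁻¹ * τ := by rw [hYi, mul_one]
    refine ⟨h1, ?_, ?_, ?_⟩
    · rw [Matrix.transpose_neg, Matrix.neg_mul, neg_neg, Matrix.transpose_mul, htinv,
        ← mul_assoc]
      rw [htinv] at h1
      calc τᵀ * Y⁻¹ * X = Yᵀ⁻¹ * τ * X := by rw [h1]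
        _ = Yᵀ⁻¹ * (τ * X) := by rw [mul_assoc]
        _ = Yᵀ⁻¹ * (Xᵀ * τᵀ) := by rw [hA]
        _ = Yᵀ⁻¹ * Xᵀ * τᵀ := by rw [mul_assoc]
    · rw [Matrix.transpose_mul, htinv]
      rw [htinv] at h1
      calc τ * (X * Y⁻¹) = τ * X * Y⁻¹ := by rw [mul_assoc]
        _ = Xᵀ * τᵀ * Y⁻¹ := by rw [hA]
        _ = Xᵀ * (τᵀ * Y⁻¹) := by rw [mul_assoc]
        _ = Xᵀ * (Yᵀ⁻¹ * τ) := by rw [h1]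
        _ = Xᵀ * Yᵀ⁻¹ * τ := by rw [mul_assoc]
    · rw [htinv] at h1
      congr 1
      rw [Matrix.transpose_sub, Matrix.transpose_neg, Matrix.transpose_mul,
        Matrix.transpose_mul, htinv, Matrix.sub_mul, Matrix.neg_mul,
        Matrix.mul_sub, Matrix.mul_neg, hB]
      congr 1
      calc τ * (X * Y⁻¹ * X) = τ * X * (Y⁻¹ * X) := by rw [mul_assoc, mul_assoc]
        _ = Xᵀ * τᵀ * (Y⁻¹ * X) := by rw [hA]
        _ = Xᵀ * (τᵀ * Y⁻¹ * X) := by rw [mul_assoc, mul_assoc]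
        _ = Xᵀ * (Yᵀ⁻¹ * τ * X) := by rw [h1]
        _ = Xᵀ * (Yᵀ⁻¹ * (τ * X)) := by rw [mul_assoc]
        _ = Xᵀ * (Yᵀ⁻¹ * (Xᵀ * τᵀ)) := by rw [hA]
        _ = Xᵀ * (Yᵀ⁻¹ * Xᵀ) * τᵀ := by rw [mul_assoc, mul_assoc]

lemma stmt17_complex {n : ℕ} (A B : Matrix (Fin n) (Fin n) ℝ) :
    ((A.map (fun r => (r:ℂ)) + Complex.I • B.map (fun r => (r:ℂ)))ᵀ
      = A.map (fun r => (r:ℂ)) + Complex.I • B.map (fun r => (r:ℂ)))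
    ↔ (Aᵀ = A ∧ Bᵀ = B) := by
  simp only [← Matrix.ext_iff, Matrix.transpose_apply, Matrix.add_apply, Matrix.smul_apply,
    Matrix.map_apply, smul_eq_mul, Complex.ext_iff, Complex.add_re, Complex.add_im,
    Complex.ofReal_re, Complex.ofReal_im, Complex.mul_re, Complex.mul_im, Complex.I_re,
    Complex.I_im, zero_mul, one_mul, mul_zero, zero_sub, sub_zero, add_zero, zero_add, neg_neg]
  exact ⟨fun h => ⟨fun i j => (h i j).1, fun i j => (h i j).2⟩,
    fun h i j => ⟨h.1 i j, h.2 i j⟩⟩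

lemma stmt17_mulT {n : ℕ} (X Y τ : Matrix (Fin n) (Fin n) ℝ) :
    (τ.map (fun r => (r:ℂ))) *
        (X.map (fun r => (r : ℂ)) + Complex.I • Y.map (fun r => (r : ℂ)))
      = (τ * X).map (fun r => (r:ℂ)) + Complex.I • (τ * Y).map (fun r => (r:ℂ)) := by
  ext i j
  simp only [Matrix.mul_apply, Matrix.add_apply, Matrix.smul_apply, Matrix.map_apply,
    smul_eq_mul, mul_add, Finset.sum_add_distrib]
  push_cast
  rw [Finset.mul_sum]
  congr 1
  exact Finset.sum_congr rfl fun k _ => by ring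

set_option maxHeartbeats 1000000 in
/-- Let `J` be the complex-structure matrix of the torus, `Ĵ = [[J,0],[0,-Jᵀ]]`
the induced generalized complex structure on `TX ⊕ T*X`, and `C = [[1,0],[b,1]]` the B-field
shear with `b = [[0,τᵀ],[-τ,0]]`.  Then the B-field transform `J(B) = C⁻¹ Ĵ C` equals `Ĵ`
iff `τ(X + iY)` is a symmetric matrix. -/
theorem stmt17 (n : ℕ) (X Y τ : Matrix (Fin n) (Fin n) ℝ) (hY : IsUnit Y.det) :
    let J : Matrix (Fin n ⊕ Fin n) (Fin n ⊕ Fin n) ℝ :=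
      Matrix.fromBlocks (-X * Y⁻¹) (-Y - X * Y⁻¹ * X) Y⁻¹ (Y⁻¹ * X)
    let Jhat : Matrix ((Fin n ⊕ Fin n) ⊕ (Fin n ⊕ Fin n))
        ((Fin n ⊕ Fin n) ⊕ (Fin n ⊕ Fin n)) ℝ := Matrix.fromBlocks J 0 0 (-Jᵀ)
    let b : Matrix (Fin n ⊕ Fin n) (Fin n ⊕ Fin n) ℝ := Matrix.fromBlocks 0 τᵀ (-τ) 0
    let C : Matrix ((Fin n ⊕ Fin n) ⊕ (Fin n ⊕ Fin n))
        ((Fin n ⊕ Fin n) ⊕ (Fin n ⊕ Fin n)) ℝ := Matrix.fromBlocks 1 0 b 1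
    let T : Matrix (Fin n) (Fin n) ℂ :=
      X.map (fun r => (r : ℂ)) + Complex.I • Y.map (fun r => (r : ℂ))
    let τc : Matrix (Fin n) (Fin n) ℂ := τ.map (fun r => (r : ℂ))
    (C⁻¹ * Jhat * C = Jhat) ↔ ((τc * T)ᵀ = τc * T) := by
  intro J Jhat b C T τc
  -- C is invertible with explicit inverse
  have hCinv : C * Matrix.fromBlocks 1 0 (-b) 1 = 1 := by
    show Matrix.fromBlocks 1 0 b 1 * Matrix.fromBlocks 1 0 (-b) 1 = 1
    rw [Matrix.fromBlocks_multiply]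
    simp [Matrix.fromBlocks_one]
  have hCinv' : Matrix.fromBlocks 1 0 (-b) 1 * C = 1 := by
    show Matrix.fromBlocks 1 0 (-b) 1 * Matrix.fromBlocks 1 0 b 1 = 1
    rw [Matrix.fromBlocks_multiply]
    simp [Matrix.fromBlocks_one]
  have : Invertible C := ⟨Matrix.fromBlocks 1 0 (-b) 1, hCinv', hCinv⟩
  have hCu : IsUnit C.det := (Matrix.isUnit_iff_isUnit_det C).1 (isUnit_of_invertible C)
  have hCC : C⁻¹ * C = 1 := Matrix.nonsing_inv_mul C hCu
  have hCC' : C * C⁻¹ = 1 := Matrix.mul_nonsing_inv C hCu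
  -- Step 1: reduce to a commutation relation
  have step1 : (C⁻¹ * Jhat * C = Jhat) ↔ (Jhat * C = C * Jhat) := by
    constructor
    · intro h
      have := congrArg (fun M => C * M) h
      simpa [← mul_assoc, hCC'] using this
    · intro h
      calc C⁻¹ * Jhat * C = C⁻¹ * (Jhat * C) := by rw [mul_assoc]
        _ = C⁻¹ * (C * Jhat) := by rw [h]
        _ = C⁻¹ * C * Jhat := by rw [mul_assoc]
        _ = Jhat := by rw [hCC, one_mul]
  rw [step1]
  -- Step 2: the commutation relation reduces to `bJ = -Jᵀb`
  have step2 : (Jhat * C = C * Jhat) ↔ (b * J = (-Jᵀ) * b) := by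
    show Matrix.fromBlocks J 0 0 (-Jᵀ) * Matrix.fromBlocks 1 0 b 1 =
        Matrix.fromBlocks 1 0 b 1 * Matrix.fromBlocks J 0 0 (-Jᵀ) ↔ _
    rw [Matrix.fromBlocks_multiply, Matrix.fromBlocks_multiply, Matrix.fromBlocks_inj]
    simp only [Matrix.zero_mul, Matrix.mul_zero, Matrix.mul_one, Matrix.one_mul,
      zero_add, add_zero]
    tauto
  rw [step2]
  -- Step 3: unfold the blocks of `bJ = -Jᵀb`
  have step3 : (b * J = (-Jᵀ) * b) ↔ ((τ * X)ᵀ = τ * X ∧ (τ * Y)ᵀ = τ * Y) := by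
    show Matrix.fromBlocks 0 τᵀ (-τ) 0 *
        Matrix.fromBlocks (-X * Y⁻¹) (-Y - X * Y⁻¹ * X) Y⁻¹ (Y⁻¹ * X) =
      -(Matrix.fromBlocks (-X * Y⁻¹) (-Y - X * Y⁻¹ * X) Y⁻¹ (Y⁻¹ * X))ᵀ *
        Matrix.fromBlocks 0 τᵀ (-τ) 0 ↔ _
    rw [Matrix.fromBlocks_transpose, Matrix.fromBlocks_neg, Matrix.fromBlocks_multiply,
      Matrix.fromBlocks_multiply, Matrix.fromBlocks_inj]
    simp only [Matrix.zero_mul, Matrix.mul_zero, zero_add, add_zero, Matrix.neg_mul,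
      Matrix.mul_neg, neg_neg, neg_zero, zero_add]
    exact stmt17_key X Y τ hY
  rw [step3]
  -- Step 4: the complex reformulation
  show _ ↔ ((τc * T)ᵀ = τc * T)
  rw [show τc * T = (τ * X).map (fun r => (r:ℂ)) + Complex.I • (τ * Y).map (fun r => (r:ℂ))
      from stmt17_mulT X Y τ]
  exact (stmt17_complex (τ * X) (τ * Y)).symm
end
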